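/- A workflow net N is 1-sound if and only if: (a) the short-circuit net N_sc is bounded from the marking {i:1}; (b) N_sc is cyclic from {i:1} (every marking reachable from {i:1} in N_sc can reach {i:1} back); and (c) some transition t of N satisfies pre(t) = {i:1} (t consumes exactly one token from i and nothing else). -/

import Mathlib

/-- A Petri net over places `P` and transitions `T`, given by pre/post arc weights. -/
structure PetriNet (P T : Type) where
  pre : T → P → ℕ
  post : T → P → ℕ

namespace PetriNet

variable {P T : Type}

/-- Transition `t` is enabled in marking `m`. -/
def Enabled (N : PetriNet P T) (m : P → ℕ) (t : T) : Prop := ∀ p, N.pre t p ≤ m p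

/-- Firing transition `t` in `m` yields `m'`. -/
def Fire (N : PetriNet P T) (m : P → ℕ) (t : T) (m' : P → ℕ) : Prop :=
  N.Enabled m t ∧ ∀ p, m' p = m p - N.pre t p + N.post t p

def Step (N : PetriNet P T) (m m' : P → ℕ) : Prop := ∃ t, N.Fire m t m'

/-- Reachability `m →* m'`. -/
def Reach (N : PetriNet P T) : (P → ℕ) → (P → ℕ) → Prop := Relation.ReflTransGen N.Step

/-- Effect of a transition, as an integer vector. -/
def eff (N : PetriNet P T) (t : T) (p : P) : ℤ := (N.post t p : ℤ) - (N.pre t p : ℤ)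

def ZStep (N : PetriNet P T) (m m' : P → ℤ) : Prop := ∃ t, ∀ p, m' p = m p + N.eff t p

/-- Z-reachability: no enabledness constraint, markings range over ℤ. -/
def ZReach (N : PetriNet P T) : (P → ℤ) → (P → ℤ) → Prop := Relation.ReflTransGen N.ZStep

/-- Maximal arc weight `‖T‖`. -/
def maxW (N : PetriNet P T) [Fintype P] [Fintype T] : ℕ :=
  Finset.univ.sup fun t => Finset.univ.sup fun p => max (N.pre t p) (N.post t p)

/-- Edge relation of the underlying graph, on `P ⊕ T`. -/
def Edge (N : PetriNet P T) : (P ⊕ T) → (P ⊕ T) → Prop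
  | Sum.inl p, Sum.inr t => 0 < N.pre t p
  | Sum.inr t, Sum.inl p => 0 < N.post t p
  | _, _ => False

/-- `N` is bounded from marking `m`. -/
def BoundedFrom (N : PetriNet P T) (m : P → ℕ) : Prop :=
  ∃ b : ℕ, ∀ m', N.Reach m m' → ∀ p, m' p ≤ b

/-- `N` is cyclic from marking `m`. -/
def CyclicFrom (N : PetriNet P T) (m : P → ℕ) : Prop :=
  ∀ m', N.Reach m m' → N.Reach m' m

/-- Transition `t` is quasi-live from `m`. -/
def QuasiLiveT (N : PetriNet P T) (m : P → ℕ) (t : T) : Prop :=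
  ∃ m', N.Reach m m' ∧ N.Enabled m' t

/-- `N` is quasi-live from `m`. -/
def QuasiLiveFrom (N : PetriNet P T) (m : P → ℕ) : Prop :=
  ∀ t, N.QuasiLiveT m t

/-- Transition `t` is live from `m`. -/
def LiveT (N : PetriNet P T) (m : P → ℕ) (t : T) : Prop :=
  ∀ m', N.Reach m m' → N.QuasiLiveT m' t

end PetriNet

/-- A workflow net: a Petri net with initial place `ini`, final place `fin`,
no production into `ini`, no consumption from `fin`, and every node on a path
from `ini` to `fin` in the underlying graph. -/
structure WorkflowNet (P T : Type) extends PetriNet P T where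
  ini : P
  fin : P
  ini_ne_fin : ini ≠ fin
  no_prod_ini : ∀ t, post t ini = 0
  no_cons_fin : ∀ t, pre t fin = 0
  on_path : ∀ v : P ⊕ T,
    Relation.ReflTransGen toPetriNet.Edge (Sum.inl ini) v ∧
    Relation.ReflTransGen toPetriNet.Edge v (Sum.inl fin)

namespace WorkflowNet

variable {P T : Type}

/-- The marking `{i : k}`. -/
def iniM [DecidableEq P] (N : WorkflowNet P T) (k : ℕ) : P → ℕ :=
  fun p => if p = N.ini then k else 0

/-- The marking `{f : k}`. -/
def finM [DecidableEq P] (N : WorkflowNet P T) (k : ℕ) : P → ℕ :=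
  fun p => if p = N.fin then k else 0

/-- `N` is `k`-sound. -/
def KSound [DecidableEq P] (N : WorkflowNet P T) (k : ℕ) : Prop :=
  ∀ m, N.toPetriNet.Reach (N.iniM k) m → N.toPetriNet.Reach m (N.finM k)

/-- `N` is generalised sound. -/
def GeneralisedSound [DecidableEq P] (N : WorkflowNet P T) : Prop :=
  ∀ k : ℕ, 1 ≤ k → N.KSound k

/-- `N` is structurally sound. -/
def StructurallySound [DecidableEq P] (N : WorkflowNet P T) : Prop :=
  ∃ k : ℕ, 1 ≤ k ∧ N.KSound k

/-- All places of `N` are nonredundant. -/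
def Nonredundant [DecidableEq P] (N : WorkflowNet P T) : Prop :=
  ∀ p : P, ∃ (k : ℕ) (m : P → ℕ), N.toPetriNet.Reach (N.iniM k) m ∧ 0 < m p

/-- `N` is strongly `k`-sound. -/
def StronglyKSound [DecidableEq P] (N : WorkflowNet P T) (k : ℕ) : Prop :=
  ∀ m : P → ℕ,
    N.toPetriNet.ZReach (fun p => ((N.iniM k) p : ℤ)) (fun p => (m p : ℤ)) →
    N.toPetriNet.Reach m (N.finM k)

end WorkflowNet

/-- The short-circuit net of a workflow net: an extra transition moving one
token from the final place back to the initial place. -/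
def WorkflowNet.shortCircuit {P T : Type} [DecidableEq P]
    (N : WorkflowNet P T) : PetriNet P (T ⊕ Unit) where
  pre := fun t p => match t with
    | Sum.inl t => N.pre t p
    | Sum.inr _ => if p = N.fin then 1 else 0
  post := fun t p => match t with
    | Sum.inl t => N.post t p
    | Sum.inr _ => if p = N.ini then 1 else 0

/-!
Boundedness of `N_sc` turns every reachable marking carrying a token on `f` into exactly `{f:1}`:
firing `t_sc` from it gives a reachable marking `≥ {i:1}`, and a strict increase could be pumped
without bound. Liveness of `t_sc` then makes `{f:1}`, hence `{i:1}`, reachable from everywhere, and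
the first transition of a run from `{i:1}` to `{f:1}` is enabled at `{i:1}`; as every transition of a
workflow net has a nonempty preset, that preset is exactly `{i:1}`. Conversely, after firing a
transition with preset `{i:1}` the place `i` is empty, and cyclicity refills it; only `t_sc`
produces on `i`, so `t_sc` gets enabled along the way.
-/

namespace PetriNet

variable {P T : Type} {N : PetriNet P T}

theorem Reach.add_right {m m' : P → ℕ} (h : N.Reach m m') (r : P → ℕ) :
    N.Reach (m + r) (m' + r) := by
  induction h with
  | refl => exact .refl
  | tail _ hstep ih =>
    obtain ⟨t, hen, hfire⟩ := hstep
    refine ih.tail ⟨t, fun p => (hen p).trans (Nat.le_add_right _ _), fun p => ?_⟩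
    have := hen p
    have := hfire p
    simp only [Pi.add_apply]
    omega

theorem Reach.pump {m r : P → ℕ} (h : N.Reach m (m + r)) (k : ℕ) :
    N.Reach m (m + k • r) := by
  induction k with
  | zero =>
    rw [zero_smul, add_zero]
    exact .refl
  | succ k ih =>
    have hshift := h.add_right (k • r)
    rw [add_assoc, ← succ_nsmul'] at hshift
    exact ih.trans hshift

theorem BoundedFrom.eq_of_reach_of_le {m m' : P → ℕ} (hb : N.BoundedFrom m)
    (h : N.Reach m m') (hle : m ≤ m') : m' = m := by
  obtain ⟨b, hbound⟩ := hb
  have hm' : m' = m + (m' - m) := by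
    funext p
    have : m p ≤ m' p := hle p
    simp only [Pi.add_apply, Pi.sub_apply]
    omega
  have hpump := (hm' ▸ h : N.Reach m (m + (m' - m))).pump (b + 1)
  funext p
  have hp := hbound _ hpump p
  have : m p ≤ m' p := hle p
  simp only [Pi.add_apply, Pi.smul_apply, Pi.sub_apply, smul_eq_mul] at hp
  have : m' p - m p = 0 := by
    by_contra hne
    nlinarith [Nat.one_le_iff_ne_zero.2 hne]
  omega

end PetriNet

namespace WorkflowNet

variable {P T : Type} (N : WorkflowNet P T)

theorem exists_pre_pos (t : T) : ∃ p, 0 < N.pre t p := by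
  obtain ⟨hpath, -⟩ := N.on_path (.inr t)
  cases hpath with
  | tail _ hedge =>
    rename_i v _
    cases v with
    | inl p => exact ⟨p, hedge⟩
    | inr _ => exact hedge.elim

variable [DecidableEq P]

theorem pre_eq_iniM_one_of_enabled {t : T} (h : N.Enabled (N.iniM 1) t) (p : P) :
    N.pre t p = N.iniM 1 p := by
  obtain ⟨q, hq⟩ := N.exists_pre_pos t
  have hqi : q = N.ini := by
    by_contra hne
    have := h q
    simp only [iniM, hne, if_false] at this
    omega
  subst hqi
  have hp := h p
  have hi := h N.ini
  by_cases hpi : p = N.ini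
  · subst hpi
    simp only [iniM, if_true] at hi ⊢
    omega
  · simp only [iniM, hpi, if_false] at hp ⊢
    omega

theorem shortCircuit_enabled_inr_iff {m : P → ℕ} {u : Unit} :
    N.shortCircuit.Enabled m (.inr u) ↔ 1 ≤ m N.fin := by
  refine ⟨fun h => by simpa [shortCircuit] using h N.fin, fun h p => ?_⟩
  by_cases hp : p = N.fin
  · subst hp
    simpa [shortCircuit] using h
  · simp [shortCircuit, hp]

theorem shortCircuit_fire_inr {m : P → ℕ} (h : 1 ≤ m N.fin) (u : Unit) :
    N.shortCircuit.Fire m (.inr u) (m - N.finM 1 + N.iniM 1) :=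
  ⟨N.shortCircuit_enabled_inr_iff.2 h, fun _ => rfl⟩

theorem eq_finM_one_of_reach (hb : N.shortCircuit.BoundedFrom (N.iniM 1)) {m : P → ℕ}
    (hm : N.shortCircuit.Reach (N.iniM 1) m) (hf : 1 ≤ m N.fin) : m = N.finM 1 := by
  have hreach : N.shortCircuit.Reach (N.iniM 1) (m - N.finM 1 + N.iniM 1) :=
    hm.tail ⟨_, N.shortCircuit_fire_inr hf ()⟩
  have hle : N.iniM 1 ≤ m - N.finM 1 + N.iniM 1 := fun p => Nat.le_add_left _ _
  funext p
  have hp := congrFun (hb.eq_of_reach_of_le hreach hle) p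
  simp only [Pi.add_apply, Pi.sub_apply, finM, iniM] at hp ⊢
  by_cases hpf : p = N.fin
  · subst hpf
    simp only [if_true, N.ini_ne_fin.symm, if_false] at hp ⊢
    omega
  · simp only [hpf, if_false, tsub_zero] at hp ⊢
    omega

theorem cyclicFrom_of_liveT (hb : N.shortCircuit.BoundedFrom (N.iniM 1))
    (hl : N.shortCircuit.LiveT (N.iniM 1) (.inr ())) :
    N.shortCircuit.CyclicFrom (N.iniM 1) := by
  intro m hm
  obtain ⟨m', hmm', hen⟩ := hl m hm
  have hf := N.shortCircuit_enabled_inr_iff.1 hen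
  obtain rfl := N.eq_finM_one_of_reach hb (hm.trans hmm') hf
  have hfire := N.shortCircuit_fire_inr hf ()
  rw [tsub_self, zero_add] at hfire
  exact hmm'.tail ⟨_, hfire⟩

theorem exists_pre_eq_iniM_one (hl : N.shortCircuit.QuasiLiveT (N.iniM 1) (.inr ())) :
    ∃ t : T, ∀ p, N.pre t p = N.iniM 1 p := by
  have hfin_empty : ¬ 1 ≤ N.iniM 1 N.fin := by simp [iniM, N.ini_ne_fin.symm]
  obtain ⟨m, hm, hen⟩ := hl
  rcases Relation.ReflTransGen.cases_head hm with rfl | ⟨_, ⟨τ, hτ, -⟩, -⟩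
  · exact (hfin_empty (N.shortCircuit_enabled_inr_iff.1 hen)).elim
  · cases τ with
    | inl t => exact ⟨t, N.pre_eq_iniM_one_of_enabled hτ⟩
    | inr _ => exact (hfin_empty (N.shortCircuit_enabled_inr_iff.1 hτ)).elim

theorem quasiLiveT_inr_of_reach_of_lt {m m' : P → ℕ} (h : N.shortCircuit.Reach m m')
    (hlt : m N.ini < m' N.ini) : N.shortCircuit.QuasiLiveT m (.inr ()) := by
  induction h using Relation.ReflTransGen.head_induction_on with
  | refl => exact (lt_irrefl _ hlt).elim
  | head hstep _ ih =>
    obtain ⟨τ, hen, hfire⟩ := hstep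
    cases τ with
    | inl t =>
      have hini := hfire N.ini
      simp only [shortCircuit, N.no_prod_ini, add_zero] at hini
      obtain ⟨m'', hreach, hen''⟩ := ih (by omega)
      exact ⟨m'', .head ⟨_, hen, hfire⟩ hreach, hen''⟩
    | inr _ => exact ⟨_, .refl, hen⟩

theorem liveT_of_cyclicFrom (hc : N.shortCircuit.CyclicFrom (N.iniM 1)) {t : T}
    (ht : ∀ p, N.pre t p = N.iniM 1 p) : N.shortCircuit.LiveT (N.iniM 1) (.inr ()) := by
  intro m hm
  have hmi := hc m hm
  have hstep : N.shortCircuit.Step (N.iniM 1) (N.iniM 1 - N.pre t + N.post t) :=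
    ⟨.inl t, fun p => (ht p).le, fun _ => rfl⟩
  have hempty : (N.iniM 1 - N.pre t + N.post t) N.ini = 0 := by
    simp [ht, N.no_prod_ini]
  have hrefill := hc _ ((hm.trans hmi).tail hstep)
  obtain ⟨m', hreach, hen⟩ :=
    N.quasiLiveT_inr_of_reach_of_lt hrefill (by simp [hempty, iniM])
  exact ⟨m', (hmi.tail hstep).trans hreach, hen⟩

end WorkflowNet

/-- Characterization of 1-soundness via the short-circuit net. -/
theorem one_sound_iff_bounded_cyclic {P T : Type} [DecidableEq P]
    (N : WorkflowNet P T)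
    (hchar : N.KSound 1 ↔
      N.shortCircuit.BoundedFrom (N.iniM 1) ∧
      N.shortCircuit.LiveT (N.iniM 1) (Sum.inr ())) :
    N.KSound 1 ↔
      N.shortCircuit.BoundedFrom (N.iniM 1) ∧
      N.shortCircuit.CyclicFrom (N.iniM 1) ∧
      ∃ t : T, (∀ p, N.pre t p = N.iniM 1 p) := by
  rw [hchar]
  constructor
  · rintro ⟨hb, hl⟩
    exact ⟨hb, N.cyclicFrom_of_liveT hb hl, N.exists_pre_eq_iniM_one (hl _ .refl)⟩
  · rintro ⟨hb, hc, t, ht⟩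
    exact ⟨hb, N.liveT_of_cyclicFrom hc ht⟩
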